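/- arXiv:2005.02938 — 3 statements merged into one kernel-verified Lean document; each statement's English description precedes it below -/
import Mathlib

section
/- Let φ be affine on the reference triangle K̂ with vertices (0,0), (1,0), (0,1). Then the sum over the three edges Ê of K̂ of the arc-length integrals of (∇φ · t_Ê)² is bounded by 2(1 + √2) times the integral of |∇φ|² over K̂. -/
/-!
Along an edge parametrized by arc length, the tangential derivative of an affine `φ` is the
constant `∇φ · t_Ê`, so the edge terms are `α²`, `β²` and `√2 · ((β - α)/√2)² = (β - α)²/√2`.
Since `(β - α)² ≤ 2 (α² + β²)`, their sum is at most `(1 + √2) |∇φ|²`, which is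
`2 (1 + √2) |K̂| |∇φ|²` because `|K̂| = 1/2`.
-/

open MeasureTheory Set

theorem volume_region_between_cc_eq_lintegral {α : Type*} [MeasurableSpace α] {μ : Measure α}
    {f g : α → ℝ} {s : Set α} (hf : Measurable f) (hg : Measurable g) (hs : MeasurableSet s) :
    μ.prod volume {p : α × ℝ | p.1 ∈ s ∧ p.2 ∈ Icc (f p.1) (g p.1)}
      = ∫⁻ x in s, ENNReal.ofReal (g x - f x) ∂μ := by
  rw [Measure.prod_apply (measurableSet_region_between_cc hf hg hs), ← lintegral_indicator hs]
  congr 1 with x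
  by_cases hx : x ∈ s
  · rw [indicator_of_mem hx, ← Real.volume_Icc]
    congr 1 with y
    simp [hx]
  · simp [hx, preimage]

lemma volume_referenceTriangle :
    volume {p : ℝ × ℝ | 0 ≤ p.1 ∧ 0 ≤ p.2 ∧ p.1 + p.2 ≤ 1} = ENNReal.ofReal (1 / 2) := by
  have hT : {p : ℝ × ℝ | 0 ≤ p.1 ∧ 0 ≤ p.2 ∧ p.1 + p.2 ≤ 1}
      = {p : ℝ × ℝ | p.1 ∈ Icc 0 1 ∧ p.2 ∈ Icc ((fun _ => 0) p.1) ((fun x => 1 - x) p.1)} := by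
    ext ⟨x, y⟩
    exact ⟨fun ⟨hx, hy, hxy⟩ => ⟨⟨hx, by linarith⟩, hy, by linarith⟩,
      fun ⟨⟨hx, _⟩, hy, hxy⟩ => ⟨hx, hy, by linarith⟩⟩
  rw [hT, Measure.volume_eq_prod, volume_region_between_cc_eq_lintegral measurable_const
    (by fun_prop) measurableSet_Icc, ← ofReal_integral_eq_lintegral_ofReal]
  · rw [integral_Icc_eq_integral_Ioc, ← intervalIntegral.integral_of_le zero_le_one]
    simp [intervalIntegral.integral_comp_sub_left (fun x => x), integral_id]
  · exact Continuous.integrableOn_Icc (by fun_prop)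
  · filter_upwards [ae_restrict_mem measurableSet_Icc] with x hx
    simp [hx.2]

lemma hasDerivAt_affine_comp_prodMk {α β c : ℝ} {φ : ℝ × ℝ → ℝ}
    (hφ : φ = fun p => α * p.1 + β * p.2 + c) {x y : ℝ → ℝ} {x' y' s : ℝ}
    (hx : HasDerivAt x x' s) (hy : HasDerivAt y y' s) :
    HasDerivAt (fun u => φ (x u, y u)) (α * x' + β * y') s := by
  subst hφ
  exact ((hx.const_mul α).add (hy.const_mul β)).add_const c

lemma intervalIntegral_deriv_sq_of_hasDerivAt {f : ℝ → ℝ} {k : ℝ} (hf : ∀ s, HasDerivAt f k s)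
    (a b : ℝ) : ∫ s in a..b, deriv f s ^ 2 = (b - a) * k ^ 2 := by
  simp [(hf _).deriv]

/-- Let `φ` be affine on the reference triangle `K̂` with vertices `(0,0)`, `(1,0)`,
`(0,1)` and gradient `(α, β)`. The sum over the three edges `Ê` of `K̂` of the
arc-length integrals of `(∇φ · t_Ê)²` (with the edges parametrized by arc length) is
bounded by `2 (1 + √2)` times `∫_{K̂} |∇φ|²`, where `|∇φ|² = α² + β²`. -/
theorem sum_edge_tangential_sq_le_reference (α β c : ℝ) (φ : ℝ × ℝ → ℝ)
    (hφ : φ = fun p => α * p.1 + β * p.2 + c) :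
    (∫ s in (0:ℝ)..1, (deriv (fun u => φ (u, 0)) s) ^ 2)
      + (∫ s in (0:ℝ)..1, (deriv (fun u => φ (0, u)) s) ^ 2)
      + (∫ s in (0:ℝ)..(Real.sqrt 2),
          (deriv (fun u => φ (1 - u / Real.sqrt 2, u / Real.sqrt 2)) s) ^ 2)
    ≤ 2 * (1 + Real.sqrt 2) *
        ∫ _p in {p : ℝ × ℝ | 0 ≤ p.1 ∧ 0 ≤ p.2 ∧ p.1 + p.2 ≤ 1},
          (α ^ 2 + β ^ 2) ∂volume := by
  have hscaled (s : ℝ) : HasDerivAt (fun u => u / Real.sqrt 2) (1 / Real.sqrt 2) s :=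
    (hasDerivAt_id' s).div_const _
  rw [intervalIntegral_deriv_sq_of_hasDerivAt
      (fun s => hasDerivAt_affine_comp_prodMk hφ (hasDerivAt_id' s) (hasDerivAt_const s 0)),
    intervalIntegral_deriv_sq_of_hasDerivAt
      (fun s => hasDerivAt_affine_comp_prodMk hφ (hasDerivAt_const s 0) (hasDerivAt_id' s)),
    intervalIntegral_deriv_sq_of_hasDerivAt
      (fun s => hasDerivAt_affine_comp_prodMk hφ ((hscaled s).const_sub 1) (hscaled s)),
    setIntegral_const, Measure.real, volume_referenceTriangle,
    ENNReal.toReal_ofReal (by norm_num), smul_eq_mul]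
  have hsqrt : 0 < Real.sqrt 2 := by positivity
  have hdiagonal : (α * -(1 / Real.sqrt 2) + β * (1 / Real.sqrt 2)) ^ 2 ≤ α ^ 2 + β ^ 2 := by
    rw [show α * -(1 / Real.sqrt 2) + β * (1 / Real.sqrt 2) = (β + -α) / Real.sqrt 2 by ring,
      div_pow, Real.sq_sqrt zero_le_two, div_le_iff₀ two_pos]
    exact add_sq_le.trans_eq (by ring)
  nlinarith [mul_le_mul_of_nonneg_left hdiagonal hsqrt.le]
end

section
/- Let φ be an affine function on a triangle K with vertices V0, V1, V2, values φ(V0) = 0, φ(V1) = α, φ(V2) = β, and let E1, E2 be the edges from V0 to V1 and V0 to V2 with lengths h_{E1}, h_{E2}, and let θ0 be the angle at V0. Then |∇φ|² = (α² h_{E2}² + β² h_{E1}² − 2αβ h_{E1} h_{E2} cos θ0) / (4|K|²). -/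
set_option maxHeartbeats 1000000


/-- Let `φ` be the affine function on a nondegenerate triangle `K ⊂ ℝ²` with vertices
`V0, V1, V2` and values `φ(V0) = 0`, `φ(V1) = α`, `φ(V2) = β`, with constant gradient
`∇φ = (g1, g2)`. With `h_{E1} = |V0V1|`, `h_{E2} = |V0V2|`, `θ0` the interior angle at
`V0`, and `|K|` the area, one has
`|∇φ|² = (α² h_{E2}² + β² h_{E1}² - 2αβ h_{E1} h_{E2} cos θ0) / (4 |K|²)`. -/
theorem grad_sq_affine_on_triangle
    (V0 V1 V2 : ℝ × ℝ) (g1 g2 c α β θ0 areaK hE1 hE2 : ℝ)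
    (φ : ℝ × ℝ → ℝ) (hφ : φ = fun p => g1 * p.1 + g2 * p.2 + c)
    (h0 : φ V0 = 0) (h1 : φ V1 = α) (h2 : φ V2 = β)
    (hhE1 : hE1 = Real.sqrt ((V1.1 - V0.1) ^ 2 + (V1.2 - V0.2) ^ 2))
    (hhE2 : hE2 = Real.sqrt ((V2.1 - V0.1) ^ 2 + (V2.2 - V0.2) ^ 2))
    (hA : areaK = |(V1.1 - V0.1) * (V2.2 - V0.2) - (V1.2 - V0.2) * (V2.1 - V0.1)| / 2)
    (hApos : 0 < areaK)
    (hcos : Real.cos θ0 =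
      ((V1.1 - V0.1) * (V2.1 - V0.1) + (V1.2 - V0.2) * (V2.2 - V0.2)) / (hE1 * hE2)) :
    g1 ^ 2 + g2 ^ 2 =
      (α ^ 2 * hE2 ^ 2 + β ^ 2 * hE1 ^ 2
        - 2 * α * β * hE1 * hE2 * Real.cos θ0) / (4 * areaK ^ 2) := by

  subst hφ
  simp only at h0 h1 h2
  set a1 := V1.1 - V0.1 with ha1
  set a2 := V1.2 - V0.2 with ha2
  set b1 := V2.1 - V0.1 with hb1
  set b2 := V2.2 - V0.2 with hb2
  have hα : α = g1 * a1 + g2 * a2 := by rw [← h1]; simp only [ha1, ha2]; linarith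
  have hβ : β = g1 * b1 + g2 * b2 := by rw [← h2]; simp only [hb1, hb2]; linarith
  have he1sq : hE1 ^ 2 = a1 ^ 2 + a2 ^ 2 := by
    rw [hhE1]; exact Real.sq_sqrt (by positivity)
  have he2sq : hE2 ^ 2 = b1 ^ 2 + b2 ^ 2 := by
    rw [hhE2]; exact Real.sq_sqrt (by positivity)
  have hD : a1 * b2 - a2 * b1 ≠ 0 := by
    intro h
    rw [hA] at hApos
    rw [show a1 * b2 - a2 * b1 = 0 from h] at hApos
    simp at hApos
  have hE1pos : 0 < hE1 := by
    rw [hhE1]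
    apply Real.sqrt_pos.2
    rcases lt_or_eq_of_le (by positivity : (0:ℝ) ≤ a1 ^ 2 + a2 ^ 2) with h | h
    · exact h
    · exfalso; apply hD
      have h1' : a1 = 0 := by
        have : a1 ^ 2 = 0 := by nlinarith [sq_nonneg a2]
        exact pow_eq_zero_iff (two_ne_zero) |>.1 this
      have h2' : a2 = 0 := by
        have : a2 ^ 2 = 0 := by nlinarith [sq_nonneg a1]
        exact pow_eq_zero_iff (two_ne_zero) |>.1 this
      rw [h1', h2']; ring
  have hE2pos : 0 < hE2 := by
    rw [hhE2]
    apply Real.sqrt_pos.2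
    rcases lt_or_eq_of_le (by positivity : (0:ℝ) ≤ b1 ^ 2 + b2 ^ 2) with h | h
    · exact h
    · exfalso; apply hD
      have h1' : b1 = 0 := by
        have : b1 ^ 2 = 0 := by nlinarith [sq_nonneg b2]
        exact pow_eq_zero_iff (two_ne_zero) |>.1 this
      have h2' : b2 = 0 := by
        have : b2 ^ 2 = 0 := by nlinarith [sq_nonneg b1]
        exact pow_eq_zero_iff (two_ne_zero) |>.1 this
      rw [h1', h2']; ring
  have hdot : hE1 * hE2 * Real.cos θ0 = a1 * b1 + a2 * b2 := by
    rw [hcos]; field_simp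
  have hAsq : 4 * areaK ^ 2 = (a1 * b2 - a2 * b1) ^ 2 := by
    rw [hA]; rw [div_pow, sq_abs]; ring
  rw [hAsq, he1sq, he2sq, hα, hβ]
  rw [show 2 * (g1 * a1 + g2 * a2) * (g1 * b1 + g2 * b2) * hE1 * hE2 * Real.cos θ0
      = 2 * (g1 * a1 + g2 * a2) * (g1 * b1 + g2 * b2) * (hE1 * hE2 * Real.cos θ0) by ring,
    hdot]
  rw [eq_div_iff (pow_ne_zero 2 hD)]
  ring
end

section
/- For every affine function φ on a triangle K satisfying the shape-regularity conditions h_{E_i} ≥ ρ_K (side lengths bounded below by the incircle diameter) and cos θ_i ≤ C_cos < 1 for all angles, the sum over the three edges E of K of ‖∇φ · t_E‖²_{L²(E)} is at most (4√2(1+√2)|K| / ((1 − C_cos) ρ_K³)) · ‖∇φ‖²_{L²(K)}. -/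
lemma cross_lower (u1 u2 v1 v2 hu hv Ccos : ℝ)
    (hhu : hu = Real.sqrt (u1^2+u2^2)) (hhv : hv = Real.sqrt (v1^2+v2^2))
    (hupos : 0 < u1^2+u2^2) (hvpos : 0 < v1^2+v2^2)
    (hdot0 : 0 ≤ u1*v1+u2*v2) (hdotC : u1*v1+u2*v2 ≤ Ccos*(hu*hv)) :
    hu*hv*Real.sqrt (1-Ccos^2) ≤ |u1*v2 - u2*v1| := by
  have hu2 : hu^2 = u1^2+u2^2 := by rw [hhu]; exact Real.sq_sqrt (by positivity)
  have hv2 : hv^2 = v1^2+v2^2 := by rw [hhv]; exact Real.sq_sqrt (by positivity)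
  have hup : 0 < hu := by rw [hhu]; exact Real.sqrt_pos.mpr hupos
  have hvp : 0 < hv := by rw [hhv]; exact Real.sqrt_pos.mpr hvpos
  rcases le_or_gt (1 - Ccos^2) 0 with hc|hc
  · have hz : Real.sqrt (1-Ccos^2) = 0 := Real.sqrt_eq_zero'.mpr hc
    rw [hz, mul_zero]
    exact abs_nonneg _
  · have hs2 : (Real.sqrt (1-Ccos^2))^2 = 1-Ccos^2 := Real.sq_sqrt hc.le
    have hs0 : 0 ≤ Real.sqrt (1-Ccos^2) := Real.sqrt_nonneg _
    have hdsq : (u1*v1+u2*v2)^2 ≤ Ccos^2*((u1^2+u2^2)*(v1^2+v2^2)) := by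
      have e2 : (Ccos*(hu*hv))^2 = Ccos^2*((u1^2+u2^2)*(v1^2+v2^2)) := by
        rw [mul_pow, mul_pow, hu2, hv2]
      nlinarith [mul_self_le_mul_self hdot0 hdotC, e2]
    have hlag : (u1*v1+u2*v2)^2 + (u1*v2-u2*v1)^2 = (u1^2+u2^2)*(v1^2+v2^2) := by ring
    have hfin : (hu*hv*Real.sqrt (1-Ccos^2))^2 ≤ (u1*v2-u2*v1)^2 := by
      have e : (hu*hv*Real.sqrt (1-Ccos^2))^2 = (1-Ccos^2)*((u1^2+u2^2)*(v1^2+v2^2)) := by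
        rw [mul_pow, mul_pow, hs2, hu2, hv2]; ring
      rw [e]; linarith [hlag, hdsq]
    have hnn : 0 ≤ hu*hv*Real.sqrt (1-Ccos^2) := by positivity
    calc hu*hv*Real.sqrt (1-Ccos^2) = Real.sqrt ((hu*hv*Real.sqrt (1-Ccos^2))^2) :=
          (Real.sqrt_sq hnn).symm
      _ ≤ Real.sqrt ((u1*v2-u2*v1)^2) := Real.sqrt_le_sqrt hfin
      _ = |u1*v2 - u2*v1| := Real.sqrt_sq_eq_abs _

lemma sqrt_two_ge : (7 : ℝ) / 5 ≤ Real.sqrt 2 := by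
  nlinarith [Real.sq_sqrt (by norm_num : (0:ℝ) ≤ 2), Real.sqrt_nonneg 2]

lemma cauchy_two (g1 g2 a1 a2 : ℝ) :
    (g1 * a1 + g2 * a2) ^ 2 ≤ (g1 ^ 2 + g2 ^ 2) * (a1 ^ 2 + a2 ^ 2) := by
  nlinarith [sq_nonneg (g1 * a2 - g2 * a1)]

lemma vec_pos_of_cross (a1 a2 b1 b2 : ℝ) (hD : 0 < |a1 * b2 - a2 * b1|) :
    0 < a1 ^ 2 + a2 ^ 2 := by
  by_contra h
  push_neg at h
  have habs : |a1 * b2 - a2 * b1| ^ 2 = (a1 * b2 - a2 * b1) ^ 2 := sq_abs _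
  nlinarith [hD, habs, sq_nonneg (a1 * b1 + a2 * b2), sq_nonneg b1, sq_nonneg b2,
    sq_nonneg a1, sq_nonneg a2, mul_pos hD hD]

set_option maxHeartbeats 1000000 in
/-- Detailed 2d edge-trace estimate. For every affine function `φ` (with constant
gradient `(g1, g2)`) on a nondegenerate triangle `K` with vertices `V0, V1, V2`, side
lengths `h01, h12, h02 ≥ ρ_K` (the incircle diameter), interior angles with cosines
bounded by `C_cos < 1`, and area `|K|`, the sum over the three edges `E` of
`‖∇φ · t_E‖²_{L²(E)} = h_E (∇φ · t_E)²` is at most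
`(4 √2 (1 + √2) |K| / ((1 - C_cos) ρ_K³)) ‖∇φ‖²_{L²(K)}`, where
`‖∇φ‖²_{L²(K)} = |K| (g1² + g2²)`. -/
theorem sum_edge_tangential_sq_le_shape_regular
    (V0 V1 V2 : ℝ × ℝ) (g1 g2 : ℝ) (areaK h01 h12 h02 ρ Ccos : ℝ)
    (hh01 : h01 = Real.sqrt ((V1.1 - V0.1) ^ 2 + (V1.2 - V0.2) ^ 2))
    (hh12 : h12 = Real.sqrt ((V2.1 - V1.1) ^ 2 + (V2.2 - V1.2) ^ 2))
    (hh02 : h02 = Real.sqrt ((V2.1 - V0.1) ^ 2 + (V2.2 - V0.2) ^ 2))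
    (hA : areaK = |(V1.1 - V0.1) * (V2.2 - V0.2) - (V1.2 - V0.2) * (V2.1 - V0.1)| / 2)
    (hApos : 0 < areaK)
    (hC0 : 0 < Ccos) (hC1 : Ccos < 1)
    (hcos0 : ((V1.1 - V0.1) * (V2.1 - V0.1) + (V1.2 - V0.2) * (V2.2 - V0.2))
        / (h01 * h02) ≤ Ccos)
    (hcos1 : ((V0.1 - V1.1) * (V2.1 - V1.1) + (V0.2 - V1.2) * (V2.2 - V1.2))
        / (h01 * h12) ≤ Ccos)
    (hcos2 : ((V0.1 - V2.1) * (V1.1 - V2.1) + (V0.2 - V2.2) * (V1.2 - V2.2))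
        / (h02 * h12) ≤ Ccos)
    (hρpos : 0 < ρ) (hρ01 : ρ ≤ h01) (hρ12 : ρ ≤ h12) (hρ02 : ρ ≤ h02) :
    ((g1 * (V1.1 - V0.1) + g2 * (V1.2 - V0.2)) / h01) ^ 2 * h01
      + ((g1 * (V2.1 - V1.1) + g2 * (V2.2 - V1.2)) / h12) ^ 2 * h12
      + ((g1 * (V2.1 - V0.1) + g2 * (V2.2 - V0.2)) / h02) ^ 2 * h02
    ≤ (4 * Real.sqrt 2 * (1 + Real.sqrt 2) * areaK / ((1 - Ccos) * ρ ^ 3))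
        * (areaK * (g1 ^ 2 + g2 ^ 2)) := by
  set a1 := V1.1 - V0.1 with ha1
  set a2 := V1.2 - V0.2 with ha2
  set b1 := V2.1 - V0.1 with hb1
  set b2 := V2.2 - V0.2 with hb2
  set c1 := V2.1 - V1.1 with hc1
  set c2 := V2.2 - V1.2 with hc2
  set D := a1 * b2 - a2 * b1 with hDdef
  set G := g1 ^ 2 + g2 ^ 2 with hGdef
  set s := Real.sqrt (1 - Ccos ^ 2) with hsdef
  set r := Real.sqrt 2 with hrdef
  clear_value a1 a2 b1 b2 c1 c2 D G s r
  have hc1b : c1 = b1 - a1 := by rw [hc1, hb1, ha1]; ring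
  have hc2b : c2 = b2 - a2 := by rw [hc2, hb2, ha2]; ring
  -- positivity of |D|
  have hDpos : 0 < |D| := by rw [hA] at hApos; linarith
  -- nondegeneracy of the three edge vectors
  have hDc : D = a1 * c2 - a2 * c1 := by rw [hDdef, hc1b, hc2b]; ring
  have hDbc : D = b1 * c2 - b2 * c1 := by rw [hDdef, hc1b, hc2b]; ring
  have hDca : D = -(c1 * a2 - c2 * a1) := by rw [hDc]; ring
  have hq01 : 0 < a1 ^ 2 + a2 ^ 2 :=
    vec_pos_of_cross a1 a2 b1 b2 (by rw [← hDdef]; exact hDpos)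
  have hq12 : 0 < c1 ^ 2 + c2 ^ 2 :=
    vec_pos_of_cross c1 c2 a1 a2 (by rw [show c1 * a2 - c2 * a1 = -D from by rw [hDca]; ring, abs_neg]; exact hDpos)
  have hq02 : 0 < b1 ^ 2 + b2 ^ 2 :=
    vec_pos_of_cross b1 b2 c1 c2 (by rw [← hDbc]; exact hDpos)
  have h01pos : 0 < h01 := by rw [hh01]; exact Real.sqrt_pos.mpr hq01
  have h12pos : 0 < h12 := by rw [hh12]; exact Real.sqrt_pos.mpr hq12
  have h02pos : 0 < h02 := by rw [hh02]; exact Real.sqrt_pos.mpr hq02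
  have hh01sq : h01 ^ 2 = a1 ^ 2 + a2 ^ 2 := by rw [hh01]; exact Real.sq_sqrt hq01.le
  have hh12sq : h12 ^ 2 = c1 ^ 2 + c2 ^ 2 := by rw [hh12]; exact Real.sq_sqrt hq12.le
  have hh02sq : h02 ^ 2 = b1 ^ 2 + b2 ^ 2 := by rw [hh02]; exact Real.sq_sqrt hq02.le
  -- s facts
  have hCsq : Ccos ^ 2 < 1 := by
    have h' := mul_lt_mul_of_pos_left hC1 hC0
    linarith [h', hC1]
  have hs2 : s ^ 2 = 1 - Ccos ^ 2 := by rw [hsdef]; exact Real.sq_sqrt (by linarith)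
  have spos : 0 < s := by rw [hsdef]; exact Real.sqrt_pos.mpr (by linarith)
  have hs0 : 0 ≤ s := spos.le
  -- r facts
  have hr2 : r ^ 2 = 2 := by rw [hrdef]; exact Real.sq_sqrt (by norm_num)
  have hr0 : 0 ≤ r := by rw [hrdef]; exact Real.sqrt_nonneg 2
  have hr14 : (7 : ℝ) / 5 ≤ r := by rw [hrdef]; exact sqrt_two_ge
  -- dot product bounds from the cosine hypotheses
  have hdotC0 : a1 * b1 + a2 * b2 ≤ Ccos * (h01 * h02) :=
    (div_le_iff₀ (mul_pos h01pos h02pos)).mp hcos0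
  have hdotC1 : (-a1) * c1 + (-a2) * c2 ≤ Ccos * (h01 * h12) := by
    calc (-a1) * c1 + (-a2) * c2
        = (V0.1 - V1.1) * c1 + (V0.2 - V1.2) * c2 := by rw [ha1, ha2]; ring
      _ ≤ Ccos * (h01 * h12) := (div_le_iff₀ (mul_pos h01pos h12pos)).mp hcos1
  have hdotC2 : b1 * c1 + b2 * c2 ≤ Ccos * (h02 * h12) := by
    calc b1 * c1 + b2 * c2
        = (V0.1 - V2.1) * (V1.1 - V2.1) + (V0.2 - V2.2) * (V1.2 - V2.2) := by
          rw [hb1, hb2, hc1, hc2]; ring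
      _ ≤ Ccos * (h02 * h12) := (div_le_iff₀ (mul_pos h02pos h12pos)).mp hcos2
  -- sums of adjacent dot products
  have hsum01 : (a1 * b1 + a2 * b2) + ((-a1) * c1 + (-a2) * c2) = a1 ^ 2 + a2 ^ 2 := by
    rw [hc1b, hc2b]; ring
  have hsum12 : ((-a1) * c1 + (-a2) * c2) + (b1 * c1 + b2 * c2) = c1 ^ 2 + c2 ^ 2 := by
    rw [hc1b, hc2b]; ring
  have hsum02 : (a1 * b1 + a2 * b2) + (b1 * c1 + b2 * c2) = b1 ^ 2 + b2 ^ 2 := by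
    rw [hc1b, hc2b]; ring
  -- mirrored data for the vector -a
  have hh01' : h01 = Real.sqrt ((-a1) ^ 2 + (-a2) ^ 2) := by
    rw [hh01]; congr 1; ring
  have hq01' : 0 < (-a1) ^ 2 + (-a2) ^ 2 := by linarith [hq01]
  -- the three cross-product lower bounds (cases)
  have HAB : 0 ≤ a1 * b1 + a2 * b2 → h01 * h02 * s ≤ |D| := by
    intro hd
    have H := cross_lower a1 a2 b1 b2 h01 h02 Ccos hh01 hh02 hq01 hq02 hd hdotC0
    rw [← hsdef, ← hDdef] at H
    exact H
  have HAC : 0 ≤ (-a1) * c1 + (-a2) * c2 → h01 * h12 * s ≤ |D| := by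
    intro hd
    have H := cross_lower (-a1) (-a2) c1 c2 h01 h12 Ccos hh01' hh12 hq01' hq12 hd hdotC1
    rw [← hsdef] at H
    rw [show (-a1) * c2 - (-a2) * c1 = -D from by rw [hDdef, hc1b, hc2b]; ring, abs_neg] at H
    exact H
  have HBC : 0 ≤ b1 * c1 + b2 * c2 → h02 * h12 * s ≤ |D| := by
    intro hd
    have H := cross_lower b1 b2 c1 c2 h02 h12 Ccos hh02 hh12 hq02 hq12 hd hdotC2
    rw [← hsdef] at H
    rw [show b1 * c2 - b2 * c1 = D from hDbc.symm] at H
    exact H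
  have H01 : h01 * ρ * s ≤ |D| := by
    rcases le_or_gt 0 (a1 * b1 + a2 * b2) with hd | hd
    · have H := HAB hd
      have hx : 0 ≤ h01 * s * (h02 - ρ) :=
        mul_nonneg (mul_nonneg h01pos.le hs0) (sub_nonneg.mpr hρ02)
      linarith [H, hx]
    · have hd1 : 0 ≤ (-a1) * c1 + (-a2) * c2 := by linarith [hsum01, hq01]
      have H := HAC hd1
      have hx : 0 ≤ h01 * s * (h12 - ρ) :=
        mul_nonneg (mul_nonneg h01pos.le hs0) (sub_nonneg.mpr hρ12)
      linarith [H, hx]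
  have H12 : h12 * ρ * s ≤ |D| := by
    rcases le_or_gt 0 ((-a1) * c1 + (-a2) * c2) with hd | hd
    · have H := HAC hd
      have hx : 0 ≤ h12 * s * (h01 - ρ) :=
        mul_nonneg (mul_nonneg h12pos.le hs0) (sub_nonneg.mpr hρ01)
      linarith [H, hx]
    · have hd2 : 0 ≤ b1 * c1 + b2 * c2 := by linarith [hsum12, hq12]
      have H := HBC hd2
      have hx : 0 ≤ h12 * s * (h02 - ρ) :=
        mul_nonneg (mul_nonneg h12pos.le hs0) (sub_nonneg.mpr hρ02)
      linarith [H, hx]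
  have H02 : h02 * ρ * s ≤ |D| := by
    rcases le_or_gt 0 (a1 * b1 + a2 * b2) with hd | hd
    · have H := HAB hd
      have hx : 0 ≤ h02 * s * (h01 - ρ) :=
        mul_nonneg (mul_nonneg h02pos.le hs0) (sub_nonneg.mpr hρ01)
      linarith [H, hx]
    · have hd2 : 0 ≤ b1 * c1 + b2 * c2 := by linarith [hsum02, hq02]
      have H := HBC hd2
      have hx : 0 ≤ h02 * s * (h12 - ρ) :=
        mul_nonneg (mul_nonneg h02pos.le hs0) (sub_nonneg.mpr hρ12)
      linarith [H, hx]
  have hA2 : ρ * ρ * s ≤ |D| := by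
    have hx : 0 ≤ (h01 - ρ) * ρ * s :=
      mul_nonneg (mul_nonneg (sub_nonneg.mpr hρ01) hρpos.le) hs0
    linarith [H01, hx]
  have hsum3 : ρ * s * (h01 + h12 + h02) ≤ 3 * |D| := by linarith [H01, H12, H02]
  -- Cauchy-Schwarz on each edge
  have hG : 0 ≤ G := by rw [hGdef]; positivity
  have e01 : ((g1 * a1 + g2 * a2) / h01) ^ 2 * h01 ≤ G * h01 := by
    have key : (g1 * a1 + g2 * a2) ^ 2 ≤ G * h01 ^ 2 := by
      rw [hGdef, hh01sq]; exact cauchy_two g1 g2 a1 a2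
    have e : ((g1 * a1 + g2 * a2) / h01) ^ 2 * h01 = (g1 * a1 + g2 * a2) ^ 2 / h01 := by
      field_simp
    rw [e, div_le_iff₀ h01pos]
    linarith [key]
  have e12 : ((g1 * c1 + g2 * c2) / h12) ^ 2 * h12 ≤ G * h12 := by
    have key : (g1 * c1 + g2 * c2) ^ 2 ≤ G * h12 ^ 2 := by
      rw [hGdef, hh12sq]; exact cauchy_two g1 g2 c1 c2
    have e : ((g1 * c1 + g2 * c2) / h12) ^ 2 * h12 = (g1 * c1 + g2 * c2) ^ 2 / h12 := by
      field_simp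
    rw [e, div_le_iff₀ h12pos]
    linarith [key]
  have e02 : ((g1 * b1 + g2 * b2) / h02) ^ 2 * h02 ≤ G * h02 := by
    have key : (g1 * b1 + g2 * b2) ^ 2 ≤ G * h02 ^ 2 := by
      rw [hGdef, hh02sq]; exact cauchy_two g1 g2 b1 b2
    have e : ((g1 * b1 + g2 * b2) / h02) ^ 2 * h02 = (g1 * b1 + g2 * b2) ^ 2 / h02 := by
      field_simp
    rw [e, div_le_iff₀ h02pos]
    linarith [key]
  -- final combination
  have h1C : (0 : ℝ) < 1 - Ccos := by linarith
  have hpos3 : 0 < (1 - Ccos) * ρ ^ 3 := mul_pos h1C (pow_pos hρpos 3)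
  have h3 : (3 : ℝ) ≤ (r + 2) * (1 + Ccos) := by
    have hrc : 0 ≤ r * Ccos := mul_nonneg hr0 hC0.le
    linarith [hr14, hrc, hC0]
  have k2 : 3 * ((1 - Ccos) * ρ ^ 2) ≤ (r + 2) * (ρ * ρ * s * s) := by
    have h4 : (0 : ℝ) ≤ (1 - Ccos) * ρ ^ 2 := mul_nonneg h1C.le (sq_nonneg ρ)
    calc 3 * ((1 - Ccos) * ρ ^ 2) ≤ ((r + 2) * (1 + Ccos)) * ((1 - Ccos) * ρ ^ 2) :=
          mul_le_mul_of_nonneg_right h3 h4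
      _ = (r + 2) * (ρ * ρ * (1 - Ccos ^ 2)) := by ring
      _ = (r + 2) * (ρ * ρ * s * s) := by rw [← hs2]; ring
  have k1 : (r + 2) * (ρ * ρ * s * s) ≤ (r + 2) * (|D| * s) := by
    have := mul_le_mul_of_nonneg_right hA2 hs0
    exact mul_le_mul_of_nonneg_left (by linarith [this]) (by linarith [hr14])
  have key : 3 * ((1 - Ccos) * ρ ^ 2) ≤ (r + 2) * (|D| * s) := k2.trans k1
  calc ((g1 * a1 + g2 * a2) / h01) ^ 2 * h01
      + ((g1 * c1 + g2 * c2) / h12) ^ 2 * h12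
      + ((g1 * b1 + g2 * b2) / h02) ^ 2 * h02
      ≤ G * h01 + G * h12 + G * h02 := add_le_add (add_le_add e01 e12) e02
    _ ≤ (4 * r * (1 + r) * areaK / ((1 - Ccos) * ρ ^ 3)) * (areaK * G) := by
        rw [hA, div_mul_eq_mul_div, le_div_iff₀ hpos3]
        have p1 : (G * ((1 - Ccos) * ρ ^ 2)) * (ρ * s * (h01 + h12 + h02))
            ≤ (G * ((1 - Ccos) * ρ ^ 2)) * (3 * |D|) :=
          mul_le_mul_of_nonneg_left hsum3 (mul_nonneg hG (mul_nonneg h1C.le (sq_nonneg ρ)))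
        have p2 : (G * |D|) * (3 * ((1 - Ccos) * ρ ^ 2)) ≤ (G * |D|) * ((r + 2) * (|D| * s)) :=
          mul_le_mul_of_nonneg_left key (mul_nonneg hG (abs_nonneg _))
        have SC : (G * h01 + G * h12 + G * h02) * ((1 - Ccos) * ρ ^ 3) * s
            ≤ ((r + 2) * (|D| ^ 2 * G)) * s := by linarith [p1, p2]
        have SC2 : (G * h01 + G * h12 + G * h02) * ((1 - Ccos) * ρ ^ 3)
            ≤ (r + 2) * (|D| ^ 2 * G) := le_of_mul_le_mul_right SC spos
        calc (G * h01 + G * h12 + G * h02) * ((1 - Ccos) * ρ ^ 3)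
            ≤ (r + 2) * (|D| ^ 2 * G) := SC2
          _ = 4 * r * (1 + r) * (|D| / 2) * (|D| / 2 * G) := by
              linear_combination (-(|D| ^ 2 * G)) * hr2
end
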